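/- arXiv:2412.04113 — 2 statements merged into one kernel-verified Lean document; each statement's English description precedes it below -/
import Mathlib

section
/- Vector-valued version of the constant-flux lemma: let d ≥ 1, let u : ℝ → ℝ^d be differentiable, and let A : ℝ → Matrix(d,d,ℝ) take symmetric values satisfying the uniform ellipticity bounds a‖ξ‖² ≤ ξᵀ A(z) ξ ≤ b‖ξ‖² for all z ∈ ℝ, ξ ∈ ℝ^d, with constants 0 < a ≤ b. If z ↦ A(z)·u'(z) is constant on ℝ and u tends to finite limits as z → +∞ and as z → −∞, then u'(z) = 0 for all z; hence u is constant and the leading-order inner displacement has no jump across the interface. -/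
/-!
Write `c` for the constant flux `A z u'(z)`. Cauchy–Schwarz for the positive semidefinite form of
`A z`, together with the upper ellipticity bound, gives `‖c‖² ≤ b ⟨c, u'(z)⟩`. So if `c ≠ 0`,
the scalar function `b ⟨c, u⟩` grows at least linearly and cannot converge at `+∞`. Hence
`c = 0`, and then `a ‖u'‖² ≤ ⟨u', A u'⟩ = ⟨u', c⟩ = 0` forces `u' = 0`.
-/

open Matrix Filter Topology

theorem Matrix.dotProduct_mulVec_sq_le {ι K : Type*} [Fintype ι] [Field K] [LinearOrder K]
    [IsStrictOrderedRing K] {A : Matrix ι ι K} (hA : A.IsSymm)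
    (hpos : ∀ ξ, 0 ≤ ξ ⬝ᵥ A *ᵥ ξ) (x y : ι → K) :
    (x ⬝ᵥ A *ᵥ y) ^ 2 ≤ (x ⬝ᵥ A *ᵥ x) * (y ⬝ᵥ A *ᵥ y) := by
  have hquad : ∀ t : K, 0 ≤ (y ⬝ᵥ A *ᵥ y) * (t * t) + 2 * (x ⬝ᵥ A *ᵥ y) * t
      + x ⬝ᵥ A *ᵥ x := by
    intro t
    have hyx : y ⬝ᵥ A *ᵥ x = x ⬝ᵥ A *ᵥ y := by
      rw [dotProduct_mulVec, ← mulVec_transpose, hA.eq, dotProduct_comm]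
    convert hpos (x + t • y) using 1
    simp only [mulVec_add, mulVec_smul, add_dotProduct, dotProduct_add, smul_dotProduct,
      dotProduct_smul, smul_eq_mul, hyx]
    ring
  have hdisc := discrim_le_zero hquad
  rw [discrim] at hdisc
  linarith

theorem Matrix.dotProduct_self_le_of_mulVec_eq {ι K : Type*} [Fintype ι] [Field K]
    [LinearOrder K] [IsStrictOrderedRing K] {A : Matrix ι ι K} (hA : A.IsSymm)
    (hpos : ∀ ξ, 0 ≤ ξ ⬝ᵥ A *ᵥ ξ) {b : K} (hle : ∀ ξ, ξ ⬝ᵥ A *ᵥ ξ ≤ b * (ξ ⬝ᵥ ξ))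
    {v c : ι → K} (hv : A *ᵥ v = c) :
    c ⬝ᵥ c ≤ b * (c ⬝ᵥ v) := by
  rcases eq_or_ne c 0 with rfl | hc
  · simp
  have hcc : 0 < c ⬝ᵥ c := lt_of_le_of_ne (Finset.sum_nonneg fun i _ => mul_self_nonneg (c i))
    (Ne.symm (mt dotProduct_self_eq_zero.mp hc))
  have hcv : 0 ≤ c ⬝ᵥ v := by simpa only [hv, dotProduct_comm v c] using hpos v
  have hcs := dotProduct_mulVec_sq_le hA hpos c v
  rw [hv, dotProduct_comm v c] at hcs
  have hmul : (c ⬝ᵥ c) * (c ⬝ᵥ c) ≤ (c ⬝ᵥ c) * (b * (c ⬝ᵥ v)) := by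
    nlinarith [mul_le_mul_of_nonneg_right (hle c) hcv]
  exact le_of_mul_le_mul_left hmul hcc

theorem tendsto_atTop_of_forall_le_deriv {f : ℝ → ℝ} (hf : Differentiable ℝ f) {ε : ℝ}
    (hε : 0 < ε) (hf' : ∀ x, ε ≤ deriv f x) : Tendsto f atTop atTop := by
  refine tendsto_atTop_mono' _ ?_ (tendsto_atTop_add_const_right _ (f 0)
    (tendsto_id.const_mul_atTop hε))
  simp only [id]
  filter_upwards [eventually_ge_atTop 0] with x hx
  have hmvt := mul_sub_le_image_sub_of_le_deriv hf hf' hx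
  rw [sub_zero] at hmvt
  linarith

theorem EuclideanSpace.norm_sq_eq_dotProduct {ι : Type*} [Fintype ι] (x : EuclideanSpace ℝ ι) :
    ‖x‖ ^ 2 = x ⬝ᵥ x := by
  rw [← real_inner_self_eq_norm_sq, EuclideanSpace.inner_eq_star_dotProduct, star_trivial]

theorem flux_eq_zero_of_tendsto_atTop {ι : Type*} [Fintype ι] {u : ℝ → EuclideanSpace ℝ ι}
    {A : ℝ → Matrix ι ι ℝ} {b : ℝ} {c : ι → ℝ} {L : EuclideanSpace ℝ ι}
    (hu : Differentiable ℝ u) (hsymm : ∀ z, (A z).IsSymm)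
    (hpos : ∀ z (ξ : EuclideanSpace ℝ ι), 0 ≤ ξ ⬝ᵥ A z *ᵥ ξ)
    (hle : ∀ z (ξ : EuclideanSpace ℝ ι), ξ ⬝ᵥ A z *ᵥ ξ ≤ b * ‖ξ‖ ^ 2)
    (hflux : ∀ z, A z *ᵥ WithLp.ofLp (deriv u z) = c) (hL : Tendsto u atTop (𝓝 L)) : c = 0 := by
  by_contra hc
  have hcc : 0 < c ⬝ᵥ c := by simpa using dotProduct_self_star_pos_iff.mpr hc
  set φ : ℝ → ℝ := fun z => b * (c ⬝ᵥ WithLp.ofLp (u z))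
  have hφ : ∀ z, HasDerivAt φ (b * (c ⬝ᵥ WithLp.ofLp (deriv u z))) z := fun z => by
    simpa [EuclideanSpace.inner_eq_star_dotProduct, dotProduct_comm] using
      ((hasDerivAt_const z (WithLp.toLp 2 c)).inner ℝ (hu z).hasDerivAt).const_mul b
  have hφ' : ∀ z, c ⬝ᵥ c ≤ deriv φ z := fun z => by
    rw [(hφ z).deriv]
    refine dotProduct_self_le_of_mulVec_eq (hsymm z) (fun ξ => hpos z (WithLp.toLp 2 ξ))
      (fun ξ => ?_) (hflux z)
    simpa [EuclideanSpace.norm_sq_eq_dotProduct] using hle z (WithLp.toLp 2 ξ)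
  have hgrow : Tendsto φ atTop atTop :=
    tendsto_atTop_of_forall_le_deriv (fun z => (hφ z).differentiableAt) hcc hφ'
  have hconv : Tendsto φ atTop (𝓝 (b * (c ⬝ᵥ WithLp.ofLp L))) := by
    simpa [EuclideanSpace.inner_eq_star_dotProduct, dotProduct_comm] using
      (tendsto_const_nhds (x := WithLp.toLp 2 c)).inner hL |>.const_mul b
  exact not_tendsto_nhds_of_tendsto_atTop hgrow _ hconv

theorem stmt12_general (d : ℕ)
    (u : ℝ → EuclideanSpace ℝ (Fin d))
    (A : ℝ → Matrix (Fin d) (Fin d) ℝ)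
    (hu : Differentiable ℝ u)
    (hsymm : ∀ z : ℝ, (A z).IsSymm)
    (a b : ℝ) (ha : 0 < a)
    (hell : ∀ (z : ℝ) (ξ : EuclideanSpace ℝ (Fin d)),
      a * ‖ξ‖ ^ 2 ≤ ξ ⬝ᵥ (A z).mulVec ξ ∧ ξ ⬝ᵥ (A z).mulVec ξ ≤ b * ‖ξ‖ ^ 2)
    (hflux : ∃ c : Fin d → ℝ, ∀ z : ℝ, (A z).mulVec (WithLp.ofLp (deriv u z)) = c)
    (Lp Lm : EuclideanSpace ℝ (Fin d))
    (hLp : Filter.Tendsto u Filter.atTop (nhds Lp))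
    (hLm : Filter.Tendsto u Filter.atBot (nhds Lm)) :
    (∀ z : ℝ, deriv u z = 0) ∧ (∀ z w : ℝ, u z = u w) ∧ Lp = Lm := by
  obtain ⟨c, hc⟩ := hflux
  have hc0 : c = 0 := flux_eq_zero_of_tendsto_atTop hu hsymm
    (fun z ξ => (by positivity : 0 ≤ a * ‖ξ‖ ^ 2).trans (hell z ξ).1) (fun z ξ => (hell z ξ).2)
    hc hLp
  have hderiv : ∀ z, deriv u z = 0 := fun z => by
    have h := (hell z (deriv u z)).1
    rw [hc z, hc0, dotProduct_zero] at h
    simpa [ha.ne'] using le_antisymm h (by positivity)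
  have hconst : ∀ z w, u z = u w := is_const_of_deriv_eq_zero hu hderiv
  refine ⟨hderiv, hconst, ?_⟩
  have hu0 : u = fun _ => u 0 := funext fun z => hconst z 0
  rw [hu0] at hLp hLm
  exact (tendsto_nhds_unique hLp tendsto_const_nhds).trans
    (tendsto_nhds_unique tendsto_const_nhds hLm)

/-- Vector-valued constant-flux lemma (no jump in the leading-order inner
displacement): if `u : ℝ → ℝ^d` is differentiable, `A` takes symmetric values and
is uniformly elliptic with constants `0 < a ≤ b`, the flux `A · u'` is constant,
and `u` has finite limits at `±∞`, then `u' ≡ 0`, `u` is constant, and the two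
limits coincide. -/
theorem stmt12 (d : ℕ) (hd : 1 ≤ d)
    (u : ℝ → EuclideanSpace ℝ (Fin d))
    (A : ℝ → Matrix (Fin d) (Fin d) ℝ)
    (hu : Differentiable ℝ u)
    (hsymm : ∀ z : ℝ, (A z).IsSymm)
    (a b : ℝ) (ha : 0 < a) (hab : a ≤ b)
    (hell : ∀ (z : ℝ) (ξ : EuclideanSpace ℝ (Fin d)),
      a * ‖ξ‖ ^ 2 ≤ ξ ⬝ᵥ (A z).mulVec ξ ∧ ξ ⬝ᵥ (A z).mulVec ξ ≤ b * ‖ξ‖ ^ 2)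
    (hflux : ∃ c : Fin d → ℝ, ∀ z : ℝ, (A z).mulVec (WithLp.ofLp (deriv u z)) = c)
    (Lp Lm : EuclideanSpace ℝ (Fin d))
    (hLp : Filter.Tendsto u Filter.atTop (nhds Lp))
    (hLm : Filter.Tendsto u Filter.atBot (nhds Lm)) :
    (∀ z : ℝ, deriv u z = 0) ∧ (∀ z w : ℝ, u z = u w) ∧ Lp = Lm :=
  stmt12_general d u A hu hsymm a b ha hell hflux Lp Lm hLp hLm
end

section
/- Interfacial phase-field flux balance: let m > 0, v ∈ ℝ, and let μ : ℝ → ℝ be twice differentiable with −v·φ₀'(z) − m·μ''(z) = 0 for all real z. If μ'(z) tends to finite limits L₊ as z → +∞ and L₋ as z → −∞, then v = −m·(L₊ − L₋); i.e., the normal velocity of the interface equals minus the mobility times the jump in the normal derivative of the chemical potential across the interface. -/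
/-!
The equation says exactly that `m μ' + v φ₀` has zero derivative, so it is constant. Since
`φ₀ → 1` at `+∞` and `φ₀ → 0` at `-∞`, its limits there are `m L₊ + v` and `m L₋`, and
these must coincide.
-/

/-- The interface profile `φ₀(z) = 1/(1 + e^{-√2 z})`. -/
noncomputable def φ₀ : ℝ → ℝ := fun z => 1 / (1 + Real.exp (-(Real.sqrt 2) * z))

open Filter Topology Real

theorem eq_of_tendsto_atTop_atBot_of_hasDerivAt_zero {E : Type*} [NormedAddCommGroup E]
    [NormedSpace ℝ E] {f : ℝ → E} {a b : E} (hf : ∀ x, HasDerivAt f 0 x)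
    (ha : Tendsto f atTop (𝓝 a)) (hb : Tendsto f atBot (𝓝 b)) : a = b := by
  have hconst : f = fun _ ↦ f 0 := funext fun x ↦
    is_const_of_deriv_eq_zero (fun y ↦ (hf y).differentiableAt) (fun y ↦ (hf y).deriv) x 0
  rw [hconst] at ha hb
  exact (tendsto_nhds_unique ha tendsto_const_nhds).trans
    (tendsto_nhds_unique tendsto_const_nhds hb)

theorem differentiable_φ₀ : Differentiable ℝ φ₀ := fun z ↦ by
  unfold φ₀
  fun_prop (disch := positivity)

theorem tendsto_φ₀_atTop : Tendsto φ₀ atTop (𝓝 1) := by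
  have h : Tendsto (fun z ↦ exp (-√2 * z)) atTop (𝓝 0) :=
    tendsto_exp_comp_nhds_zero.2 (tendsto_id.const_mul_atTop_of_neg (by simp))
  unfold φ₀
  simpa using (h.const_add 1).inv₀ (by norm_num)

theorem tendsto_φ₀_atBot : Tendsto φ₀ atBot (𝓝 0) := by
  have h : Tendsto (fun z ↦ exp (-√2 * z)) atBot atTop :=
    tendsto_exp_comp_atTop.2 (tendsto_id.const_mul_atBot_of_neg (by simp))
  unfold φ₀
  simpa [Pi.inv_def] using (tendsto_atTop_add_const_left _ 1 h).inv_tendsto_atTop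

theorem stmt14_general (m v : ℝ) (μ : ℝ → ℝ)
    (hμ' : Differentiable ℝ (deriv μ))
    (heq : ∀ z : ℝ, -v * deriv φ₀ z - m * deriv (deriv μ) z = 0)
    (Lp Lm : ℝ)
    (hLp : Filter.Tendsto (deriv μ) Filter.atTop (nhds Lp))
    (hLm : Filter.Tendsto (deriv μ) Filter.atBot (nhds Lm)) :
    v = -m * (Lp - Lm) := by
  have hflux : ∀ z, HasDerivAt (fun z ↦ m * deriv μ z + v * φ₀ z) 0 z := fun z ↦ by
    refine (((hμ' z).hasDerivAt.const_mul m).add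
      ((differentiable_φ₀ z).hasDerivAt.const_mul v)).congr_deriv ?_
    linarith [heq z]
  have hlimits := eq_of_tendsto_atTop_atBot_of_hasDerivAt_zero hflux
    ((hLp.const_mul m).add (tendsto_φ₀_atTop.const_mul v))
    ((hLm.const_mul m).add (tendsto_φ₀_atBot.const_mul v))
  linarith

/-- Interfacial phase-field flux balance: if `-v φ₀' - m μ'' = 0` on `ℝ` for a
twice differentiable `μ` whose derivative has finite limits `L₊`, `L₋` at `±∞`,
then the normal interface velocity satisfies `v = -m (L₊ - L₋)`. -/
theorem stmt14 (m v : ℝ) (hm : 0 < m) (μ : ℝ → ℝ)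
    (hμ : Differentiable ℝ μ) (hμ' : Differentiable ℝ (deriv μ))
    (heq : ∀ z : ℝ, -v * deriv φ₀ z - m * deriv (deriv μ) z = 0)
    (Lp Lm : ℝ)
    (hLp : Filter.Tendsto (deriv μ) Filter.atTop (nhds Lp))
    (hLm : Filter.Tendsto (deriv μ) Filter.atBot (nhds Lm)) :
    v = -m * (Lp - Lm) :=
  stmt14_general m v μ hμ' heq Lp Lm hLp hLm
end
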